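/- Let γ > 0 and let L : M_2(ℂ) → M_2(ℂ) be the spontaneous-emission Lindbladian with single jump operator √γ |0⟩⟨1|, i.e. L(ρ) = γ(⟨1|ρ|1⟩ |0⟩⟨0| − ½(|1⟩⟨1|ρ + ρ|1⟩⟨1|)). Then L is not quantum programmable: there exist no d_P ≥ 1, quantum channel P : M_2(ℂ) ⊗ M_{d_P}(ℂ) → M_2(ℂ), and family of density matrices (π_t)_{t≥0} in M_{d_P}(ℂ) differentiable at t = 0 such that P(ρ ⊗ π_t) = e^{tL}(ρ) for all density matrices ρ ∈ M_2(ℂ) and all t ≥ 0. -/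

import Mathlib

open scoped Kronecker ComplexOrder Matrix

noncomputable section

/-- The Choi matrix of a linear map between matrix algebras. -/
def choi {ι κ : Type*} [Fintype ι] [DecidableEq ι] [Fintype κ]
    (E : Matrix ι ι ℂ →ₗ[ℂ] Matrix κ κ ℂ) : Matrix (ι × κ) (ι × κ) ℂ :=
  ∑ i : ι, ∑ j : ι, Matrix.single i j (1 : ℂ) ⊗ₖ E (Matrix.single i j 1)

/-- A quantum channel: completely positive (positive semidefinite Choi matrix) and
trace preserving. -/
def IsCPTP {ι κ : Type*} [Fintype ι] [DecidableEq ι] [Fintype κ]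
    (E : Matrix ι ι ℂ →ₗ[ℂ] Matrix κ κ ℂ) : Prop :=
  (choi E).PosSemidef ∧ ∀ X, (E X).trace = X.trace

/-- A density matrix: positive semidefinite with unit trace. -/
def IsDensityMatrix {ι : Type*} [Fintype ι] (ρ : Matrix ι ι ℂ) : Prop :=
  ρ.PosSemidef ∧ ρ.trace = 1

/-- The exponential `e^L` of a superoperator `L`, taken in the algebra of linear
endomorphisms of the matrix space (computed via the matrix exponential in the
standard basis of the matrix space). -/
def expL {ι : Type*} [Fintype ι] [DecidableEq ι]
    (L : Matrix ι ι ℂ →ₗ[ℂ] Matrix ι ι ℂ) : Matrix ι ι ℂ →ₗ[ℂ] Matrix ι ι ℂ :=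
  Matrix.toLin (Matrix.stdBasis ℂ ι ι) (Matrix.stdBasis ℂ ι ι)
    (NormedSpace.exp (LinearMap.toMatrix (Matrix.stdBasis ℂ ι ι) (Matrix.stdBasis ℂ ι ι) L))

/-- A Lindbladian: `L(ρ) = -i[H,ρ] + Σ_j γ_j (A_j ρ A_j† - ½{A_j†A_j, ρ})` with `H`
Hermitian and rates `γ_j ≥ 0`. -/
def IsLindbladian {ι : Type*} [Fintype ι] [DecidableEq ι]
    (L : Matrix ι ι ℂ →ₗ[ℂ] Matrix ι ι ℂ) : Prop :=
  ∃ (J : ℕ) (H : Matrix ι ι ℂ) (γ : Fin J → ℝ) (A : Fin J → Matrix ι ι ℂ),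
    H.IsHermitian ∧ (∀ j, 0 ≤ γ j) ∧
    ∀ ρ, L ρ = -(Complex.I) • (H * ρ - ρ * H) +
      ∑ j, (γ j : ℂ) •
        (A j * ρ * (A j)ᴴ - (2⁻¹ : ℂ) • ((A j)ᴴ * A j * ρ + ρ * ((A j)ᴴ * A j)))

/-- `L` is quantum programmable: there are a finite-dimensional program register, a fixed
quantum channel `P`, and a continuous family of program (density) states `π t` such that
`P (X ⊗ π t) = e^{tL} X` for all `t ≥ 0`. -/
def QuantumProgrammable {ι : Type*} [Fintype ι] [DecidableEq ι]
    (L : Matrix ι ι ℂ →ₗ[ℂ] Matrix ι ι ℂ) : Prop :=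
  ∃ dP : ℕ, 1 ≤ dP ∧
    ∃ (P : Matrix (ι × Fin dP) (ι × Fin dP) ℂ →ₗ[ℂ] Matrix ι ι ℂ)
      (π : ℝ → Matrix (Fin dP) (Fin dP) ℂ),
      IsCPTP P ∧ ContinuousOn π (Set.Ici 0) ∧
      (∀ t : ℝ, 0 ≤ t → IsDensityMatrix (π t)) ∧
      ∀ t : ℝ, 0 ≤ t → ∀ X, P (X ⊗ₖ π t) = expL ((t : ℂ) • L) X

/-! ### Auxiliary lemmas -/

section ExpL
variable {ι : Type*} [Fintype ι] [DecidableEq ι]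

lemma expL_zero_apply (X : Matrix ι ι ℂ) :
    expL (0 : Matrix ι ι ℂ →ₗ[ℂ] Matrix ι ι ℂ) X = X := by
  rw [expL, map_zero, NormedSpace.exp_zero, Matrix.toLin_one, LinearMap.id_apply]

lemma hasDerivAt_expL (Lm : Matrix ι ι ℂ →ₗ[ℂ] Matrix ι ι ℂ) (X : Matrix ι ι ℂ) (k l : ι) :
    HasDerivAt (fun t : ℝ => expL ((t : ℂ) • Lm) X k l) (Lm X k l) 0 := by
  classical
  letI : SeminormedRing (Matrix (ι × ι) (ι × ι) ℂ) := Matrix.linftyOpSemiNormedRing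
  letI : NormedRing (Matrix (ι × ι) (ι × ι) ℂ) := Matrix.linftyOpNormedRing
  letI : NormedAlgebra ℂ (Matrix (ι × ι) (ι × ι) ℂ) := Matrix.linftyOpNormedAlgebra
  haveI : CompleteSpace (Matrix (ι × ι) (ι × ι) ℂ) := FiniteDimensional.complete ℂ _
  set A := LinearMap.toMatrix (Matrix.stdBasis ℂ ι ι) (Matrix.stdBasis ℂ ι ι) Lm with hA
  have h1 : HasDerivAt (fun u : ℂ => NormedSpace.exp (u • A))
      (NormedSpace.exp ((0:ℂ) • A) * A) 0 := hasDerivAt_exp_smul_const A 0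
  rw [zero_smul, NormedSpace.exp_zero, one_mul] at h1
  have hof : HasDerivAt (fun t : ℝ => (t : ℂ)) 1 0 := by
    exact Complex.ofRealCLM.hasDerivAt (x := (0:ℝ))
  have h2 : HasDerivAt (fun t : ℝ => NormedSpace.exp ((t : ℂ) • A)) A 0 := by
    have := HasDerivAt.scomp (0:ℝ) (by exact h1) hof
    rw [one_smul] at this
    exact this
  let evl : Matrix (ι × ι) (ι × ι) ℂ →ₗ[ℂ] ℂ :=
    { toFun := fun B => Matrix.toLin (Matrix.stdBasis ℂ ι ι) (Matrix.stdBasis ℂ ι ι) B X k l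
      map_add' := by
        intro B C
        simp [Matrix.add_apply]
      map_smul' := by
        intro c B
        simp }
  let evc : Matrix (ι × ι) (ι × ι) ℂ →L[ℝ] ℂ :=
    (LinearMap.toContinuousLinearMap evl).restrictScalars ℝ
  have h3 : HasDerivAt (fun t : ℝ => evc (NormedSpace.exp ((t:ℂ) • A))) (evc A) 0 :=
    evc.hasFDerivAt.comp_hasDerivAt (0:ℝ) h2
  have hfun : (fun t : ℝ => evc (NormedSpace.exp ((t:ℂ) • A)))
      = fun t : ℝ => expL ((t : ℂ) • Lm) X k l := by
    funext t
    show Matrix.toLin (Matrix.stdBasis ℂ ι ι) (Matrix.stdBasis ℂ ι ι)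
      (NormedSpace.exp ((t:ℂ) • A)) X k l = _
    rw [expL, map_smul, hA]
  have hval : evc A = Lm X k l := by
    show Matrix.toLin (Matrix.stdBasis ℂ ι ι) (Matrix.stdBasis ℂ ι ι) A X k l = _
    rw [hA, Matrix.toLin_toMatrix]
  rw [hfun, hval] at h3
  exact h3

end ExpL

section Generic
variable {m : Type*} [Fintype m] [DecidableEq m]

open scoped MatrixOrder in
/-- square root of a positive semidefinite matrix -/
def Matrix.PosSemidef.sqrt {A : Matrix m m ℂ} (_hA : A.PosSemidef) : Matrix m m ℂ :=
  CFC.sqrt A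

open scoped MatrixOrder in
lemma Matrix.PosSemidef.posSemidef_sqrt {A : Matrix m m ℂ} (hA : A.PosSemidef) :
    hA.sqrt.PosSemidef :=
  Matrix.nonneg_iff_posSemidef.mp (CFC.sqrt_nonneg A)

open scoped MatrixOrder in
lemma Matrix.PosSemidef.sqrt_mul_self {A : Matrix m m ℂ} (hA : A.PosSemidef) :
    hA.sqrt * hA.sqrt = A :=
  CFC.sqrt_mul_sqrt_self A hA.nonneg

omit [DecidableEq m] in
lemma trace_CtC_nonneg (C : Matrix m m ℂ) : 0 ≤ (Cᴴ * C).trace := by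
  rw [Matrix.trace]
  refine Finset.sum_nonneg fun i _ => ?_
  rw [Matrix.diag_apply, Matrix.mul_apply]
  refine Finset.sum_nonneg fun j _ => ?_
  simpa [Matrix.conjTranspose_apply] using star_mul_self_nonneg (C j i)

omit [DecidableEq m] in
lemma CtC_eq_zero_of_trace (C : Matrix m m ℂ) (h : (Cᴴ * C).trace = 0) : C = 0 := by
  rw [Matrix.trace] at h
  have h1 := (Finset.sum_eq_zero_iff_of_nonneg (fun i _ => by
    rw [Matrix.diag_apply, Matrix.mul_apply]
    refine Finset.sum_nonneg fun j _ => ?_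
    simpa [Matrix.conjTranspose_apply] using star_mul_self_nonneg (C j i))).mp h
  ext i j
  have h2 := h1 j (Finset.mem_univ j)
  rw [Matrix.diag_apply, Matrix.mul_apply] at h2
  have h3 := (Finset.sum_eq_zero_iff_of_nonneg (fun k _ => by
    simpa [Matrix.conjTranspose_apply] using star_mul_self_nonneg (C k j))).mp h2
  have h4 := h3 i (Finset.mem_univ i)
  rw [Matrix.conjTranspose_apply] at h4
  simp only [Matrix.zero_apply]
  rcases mul_eq_zero.mp h4 with h' | h'
  · exact star_eq_zero.mp h'
  · exact h'

lemma trace_mul_psd_eq {A B : Matrix m m ℂ} (hA : A.PosSemidef) (hB : B.PosSemidef) :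
    (A * B).trace = ((hA.sqrt * hB.sqrt)ᴴ * (hA.sqrt * hB.sqrt)).trace := by
  have hS : (hA.sqrt)ᴴ = hA.sqrt := hA.posSemidef_sqrt.isHermitian
  have hT : (hB.sqrt)ᴴ = hB.sqrt := hB.posSemidef_sqrt.isHermitian
  rw [Matrix.conjTranspose_mul, hS, hT]
  rw [Matrix.trace_mul_comm (hB.sqrt * hA.sqrt) (hA.sqrt * hB.sqrt)]
  rw [show hA.sqrt * hB.sqrt * (hB.sqrt * hA.sqrt)
      = hA.sqrt * (hB.sqrt * hB.sqrt) * hA.sqrt by noncomm_ring]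
  rw [hB.sqrt_mul_self, Matrix.trace_mul_cycle, hA.sqrt_mul_self]

lemma trace_mul_psd_nonneg {A B : Matrix m m ℂ}
    (hA : A.PosSemidef) (hB : B.PosSemidef) : 0 ≤ (A * B).trace := by
  rw [trace_mul_psd_eq hA hB]; exact trace_CtC_nonneg _

lemma mul_eq_zero_of_trace_mul_psd {A B : Matrix m m ℂ}
    (hA : A.PosSemidef) (hB : B.PosSemidef) (h : (A * B).trace = 0) : A * B = 0 := by
  rw [trace_mul_psd_eq hA hB] at h
  have hC : hA.sqrt * hB.sqrt = 0 := CtC_eq_zero_of_trace _ h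
  have e : A * B = hA.sqrt * (hA.sqrt * hB.sqrt) * hB.sqrt := by
    conv_lhs => rw [← hA.sqrt_mul_self, ← hB.sqrt_mul_self]
    noncomm_ring
  rw [e, hC, mul_zero, zero_mul]

lemma exists_support_proj {ρ : Matrix m m ℂ} (hρ : ρ.PosSemidef) :
    ∃ Q : Matrix m m ℂ, Qᴴ = Q ∧ ρ * Q = ρ ∧
      ∀ J : Matrix m m ℂ, ρ * J = 0 → Q * J = 0 := by
  have hH := hρ.1
  set U : Matrix m m ℂ := (hH.eigenvectorUnitary : Matrix m m ℂ) with hU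
  have hUU : (star U) * U = 1 := Matrix.mem_unitaryGroup_iff'.mp hH.eigenvectorUnitary.2
  set χ : m → ℂ := fun s => if hH.eigenvalues s = 0 then 0 else 1 with hχ
  refine ⟨U * Matrix.diagonal χ * (star U), ?_, ?_, ?_⟩
  · rw [Matrix.conjTranspose_mul, Matrix.conjTranspose_mul, Matrix.diagonal_conjTranspose]
    have hsχ : star χ = χ := by
      funext s
      by_cases h : hH.eigenvalues s = 0 <;> simp [hχ, h]
    rw [hsχ]
    simp [Matrix.star_eq_conjTranspose, mul_assoc]
  · conv_lhs => rw [hH.spectral_theorem, Unitary.conjStarAlgAut_apply, ← hU]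
    rw [show U * Matrix.diagonal (RCLike.ofReal ∘ hH.eigenvalues) * star U *
          (U * Matrix.diagonal χ * star U)
        = U * (Matrix.diagonal (RCLike.ofReal ∘ hH.eigenvalues) * ((star U * U) *
            Matrix.diagonal χ)) * star U by noncomm_ring]
    rw [hUU, one_mul, Matrix.diagonal_mul_diagonal]
    have hfun : (fun i => (RCLike.ofReal ∘ hH.eigenvalues) i * χ i)
        = (RCLike.ofReal ∘ hH.eigenvalues) := by
      funext s
      by_cases h : hH.eigenvalues s = 0 <;> simp [hχ, h, Function.comp]
    rw [hfun]
    exact hH.spectral_theorem.symm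
  · intro J hJ
    have h1 : Matrix.diagonal (RCLike.ofReal ∘ hH.eigenvalues) * ((star U) * J) = 0 := by
      have h0 : (star U) * (ρ * J) = 0 := by rw [hJ, mul_zero]
      conv_lhs at h0 => rw [hH.spectral_theorem, Unitary.conjStarAlgAut_apply, ← hU]
      rw [show star U * (U * Matrix.diagonal (RCLike.ofReal ∘ hH.eigenvalues) * star U * J)
          = (star U * U) * (Matrix.diagonal (RCLike.ofReal ∘ hH.eigenvalues) * (star U * J)) by
        noncomm_ring] at h0
      rwa [hUU, one_mul] at h0
    have h2 : Matrix.diagonal χ * ((star U) * J) = 0 := by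
      ext p q
      have hpq : ((Matrix.diagonal (RCLike.ofReal ∘ hH.eigenvalues) * ((star U) * J) :
          Matrix m m ℂ)) p q = 0 := by rw [h1, Matrix.zero_apply]
      rw [Matrix.diagonal_mul] at hpq
      rw [Matrix.diagonal_mul, Matrix.zero_apply]
      by_cases h : hH.eigenvalues p = 0
      · simp [hχ, h]
      · have hne : ((hH.eigenvalues p : ℝ) : ℂ) ≠ 0 := by simpa using h
        have hB : (star U * J) p q = 0 := by
          rcases mul_eq_zero.mp hpq with h' | h'
          · exact absurd h' (by simpa using hne)
          · exact h'
        simp [hχ, h, hB]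
    calc U * Matrix.diagonal χ * star U * J = U * (Matrix.diagonal χ * (star U * J)) := by
          noncomm_ring
      _ = 0 := by rw [h2, mul_zero]

end Generic

section Calculus

lemma deriv_nonneg_of_nonneg {f : ℝ → ℝ} {c : ℝ} (h : HasDerivWithinAt f c (Set.Ici 0) 0)
    (h0 : f 0 = 0) (hf : ∀ t, 0 ≤ t → 0 ≤ f t) : 0 ≤ c := by
  have h' := (hasDerivWithinAt_iff_tendsto_slope).mp h
  have hset : Set.Ici (0:ℝ) \ {0} = Set.Ioi 0 := Set.Ici_sdiff_left
  rw [hset] at h'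
  refine ge_of_tendsto h' ?_
  filter_upwards [self_mem_nhdsWithin] with t ht
  have ht' : 0 < t := ht
  rw [slope_def_field, h0]
  simp only [sub_zero]
  exact div_nonneg (hf t ht'.le) ht'.le

lemma HasDerivWithinAt.cre {f : ℝ → ℂ} {c : ℂ} {s : Set ℝ} {x : ℝ}
    (h : HasDerivWithinAt f c s x) :
    HasDerivWithinAt (fun t => (f t).re) c.re s x := by
  exact (Complex.reCLM.hasFDerivAt.comp_hasDerivWithinAt x h)

lemma HasDerivWithinAt.cstar {f : ℝ → ℂ} {c : ℂ} {s : Set ℝ} {x : ℝ}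
    (h : HasDerivWithinAt f c s x) :
    HasDerivWithinAt (fun t => star (f t)) (star c) s x := by
  exact ((Complex.conjCLE.toContinuousLinearMap).hasFDerivAt.comp_hasDerivWithinAt x h)

end Calculus

section ChoiHelpers

lemma choi_apply {ι κ : Type*} [Fintype ι] [DecidableEq ι] [Fintype κ]
    (E : Matrix ι ι ℂ →ₗ[ℂ] Matrix κ κ ℂ) (i j : ι) (k l : κ) :
    choi E (i, k) (j, l) = E (Matrix.single i j 1) k l := by
  rw [choi]
  rw [Matrix.sum_apply]
  simp only [Matrix.sum_apply, Matrix.kroneckerMap_apply, Matrix.single,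
    Matrix.of_apply, ite_and, ite_mul, one_mul, zero_mul]
  rw [Finset.sum_eq_single i]
  · rw [Finset.sum_eq_single j] <;> simp +contextual
  · intro b _ hb; simp [hb]
  · simp

lemma kron_stdb {ι κ : Type*} [DecidableEq ι] [DecidableEq κ]
    (a b : ι) (p q : κ) :
    Matrix.single a b (1:ℂ) ⊗ₖ Matrix.single p q (1:ℂ)
      = Matrix.single (a,p) (b,q) (1:ℂ) := by
  ext ⟨c,r⟩ ⟨d,s⟩
  simp only [Matrix.kroneckerMap_apply, Matrix.single, Matrix.of_apply,
    Prod.mk.injEq, ite_and, ite_mul, one_mul, zero_mul]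
  split_ifs <;> simp_all

end ChoiHelpers

namespace SpanDensity

def ρa : Matrix (Fin 2) (Fin 2) ℂ := Matrix.single 0 0 1
def ρb : Matrix (Fin 2) (Fin 2) ℂ := Matrix.single 1 1 1
def ρc : Matrix (Fin 2) (Fin 2) ℂ := (2⁻¹ : ℂ) • !![1, 1; 1, 1]
def ρd : Matrix (Fin 2) (Fin 2) ℂ := (2⁻¹ : ℂ) • !![1, -Complex.I; Complex.I, 1]

lemma half_nonneg : (0:ℂ) ≤ 2⁻¹ := by
  rw [show ((2⁻¹ : ℂ)) = ((2⁻¹ : ℝ) : ℂ) by norm_num]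
  exact Complex.zero_le_real.mpr (by norm_num)

lemma ρa_density : IsDensityMatrix ρa := by
  refine ⟨Matrix.PosSemidef.of_dotProduct_mulVec_nonneg ?_ ?_, ?_⟩
  · ext k l
    fin_cases k <;> fin_cases l <;>
      simp [ρa, Matrix.conjTranspose_apply, Matrix.single]
  · intro x
    have e : dotProduct (star x) (ρa *ᵥ x) = star (x 0) * x 0 := by
      simp [ρa, dotProduct, Matrix.mulVec, Fin.sum_univ_two, Matrix.single]
    rw [e]
    exact star_mul_self_nonneg _
  · simp [ρa, Matrix.trace, Fin.sum_univ_two, Matrix.single]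

lemma ρb_density : IsDensityMatrix ρb := by
  refine ⟨Matrix.PosSemidef.of_dotProduct_mulVec_nonneg ?_ ?_, ?_⟩
  · ext k l
    fin_cases k <;> fin_cases l <;>
      simp [ρb, Matrix.conjTranspose_apply, Matrix.single]
  · intro x
    have e : dotProduct (star x) (ρb *ᵥ x) = star (x 1) * x 1 := by
      simp [ρb, dotProduct, Matrix.mulVec, Fin.sum_univ_two, Matrix.single]
    rw [e]
    exact star_mul_self_nonneg _
  · simp [ρb, Matrix.trace, Fin.sum_univ_two, Matrix.single]

lemma ρc_density : IsDensityMatrix ρc := by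
  refine ⟨Matrix.PosSemidef.of_dotProduct_mulVec_nonneg ?_ ?_, ?_⟩
  · ext k l
    fin_cases k <;> fin_cases l <;>
      simp [ρc, Matrix.conjTranspose_apply]
  · intro x
    have e : dotProduct (star x) (ρc *ᵥ x)
        = 2⁻¹ * (star (x 0 + x 1) * (x 0 + x 1)) := by
      simp [ρc, dotProduct, Matrix.mulVec, Fin.sum_univ_two, star_add]
      ring
    rw [e]
    exact mul_nonneg half_nonneg (star_mul_self_nonneg _)
  · simp [ρc, Matrix.trace, Fin.sum_univ_two]
    norm_num

lemma ρd_density : IsDensityMatrix ρd := by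
  refine ⟨Matrix.PosSemidef.of_dotProduct_mulVec_nonneg ?_ ?_, ?_⟩
  · ext k l
    fin_cases k <;> fin_cases l <;>
      simp [ρd, Matrix.conjTranspose_apply]
  · intro x
    have e : dotProduct (star x) (ρd *ᵥ x)
        = 2⁻¹ * (star (x 0 - Complex.I * x 1) * (x 0 - Complex.I * x 1)) := by
      simp [ρd, dotProduct, Matrix.mulVec, Fin.sum_univ_two, star_add, star_sub,
        star_mul, Complex.star_def, Complex.conj_I]
      ring_nf
      linear_combination (2⁻¹ * x 1 * (starRingEnd ℂ) (x 1)) * Complex.I_sq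
    rw [e]
    exact mul_nonneg half_nonneg (star_mul_self_nonneg _)
  · simp [ρd, Matrix.trace, Fin.sum_univ_two]
    norm_num

lemma stdb_mat :
    Matrix.single (0:Fin 2) (0:Fin 2) (1:ℂ) = !![1,0;0,0] ∧
    Matrix.single (0:Fin 2) (1:Fin 2) (1:ℂ) = !![0,1;0,0] ∧
    Matrix.single (1:Fin 2) (0:Fin 2) (1:ℂ) = !![0,0;1,0] ∧
    Matrix.single (1:Fin 2) (1:Fin 2) (1:ℂ) = !![0,0;0,1] := by
  refine ⟨?_, ?_, ?_, ?_⟩ <;>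
    · ext k l
      fin_cases k <;> fin_cases l <;> simp [Matrix.single, Matrix.of_apply]

lemma ρa_mat : ρa = !![1,0;0,0] := stdb_mat.1
lemma ρb_mat : ρb = !![0,0;0,1] := stdb_mat.2.2.2

lemma E01_combo : Matrix.single (0 : Fin 2) 1 (1:ℂ)
    = ρc + Complex.I • ρd - ((1 + Complex.I)/2) • ρa - ((1 + Complex.I)/2) • ρb := by
  rw [stdb_mat.2.1, ρa_mat, ρb_mat]
  ext k l
  fin_cases k <;> fin_cases l <;>
    simp [ρc, ρd, Matrix.smul_apply, Matrix.sub_apply, Matrix.add_apply] <;> ring_nf <;>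
    simp [Complex.I_sq] <;> ring

lemma E10_combo : Matrix.single (1 : Fin 2) 0 (1:ℂ)
    = ρc - Complex.I • ρd - ((1 - Complex.I)/2) • ρa - ((1 - Complex.I)/2) • ρb := by
  rw [stdb_mat.2.2.1, ρa_mat, ρb_mat]
  ext k l
  fin_cases k <;> fin_cases l <;>
    simp [ρc, ρd, Matrix.smul_apply, Matrix.sub_apply, Matrix.add_apply] <;> ring_nf <;>
    simp [Complex.I_sq] <;> ring

lemma E00_eq : Matrix.single (0 : Fin 2) 0 (1:ℂ) = ρa := rfl
lemma E11_eq : Matrix.single (1 : Fin 2) 1 (1:ℂ) = ρb := rfl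

lemma linearMap_eq_of_eq_on_density {V : Type*} [AddCommGroup V] [Module ℂ V]
    (F G : Matrix (Fin 2) (Fin 2) ℂ →ₗ[ℂ] V)
    (h : ∀ ρ, IsDensityMatrix ρ → F ρ = G ρ) : ∀ X, F X = G X := by
  have ha := h ρa ρa_density
  have hb := h ρb ρb_density
  have hc := h ρc ρc_density
  have hd := h ρd ρd_density
  have hE : ∀ i j : Fin 2, F (Matrix.single i j 1) = G (Matrix.single i j 1) := by
    simp only [Fin.forall_fin_two]
    refine ⟨⟨?_, ?_⟩, ?_, ?_⟩
    · rw [E00_eq]; exact ha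
    · rw [E01_combo]; simp only [map_sub, map_add, map_smul, ha, hb, hc, hd]
    · rw [E10_combo]; simp only [map_sub, map_add, map_smul, ha, hb, hc, hd]
    · rw [E11_eq]; exact hb
  intro X
  rw [Matrix.matrix_eq_sum_single X, map_sum, map_sum]
  refine Finset.sum_congr rfl fun i _ => ?_
  rw [map_sum, map_sum]
  refine Finset.sum_congr rfl fun j _ => ?_
  rw [show Matrix.single i j (X i j) = X i j • Matrix.single i j (1:ℂ) by
    rw [Matrix.smul_single, smul_eq_mul, mul_one], map_smul, map_smul, hE i j]

end SpanDensity

section Machinery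

variable {dP : ℕ}
  (P : Matrix (Fin 2 × Fin dP) (Fin 2 × Fin dP) ℂ →ₗ[ℂ] Matrix (Fin 2) (Fin 2) ℂ)

/-- auxiliary sandwich matrix -/
def HmD (v : (Fin 2 × Fin 2) → ℂ) : Matrix (Fin dP) (Fin dP) ℂ :=
  Matrix.of fun p q => ∑ x : Fin 2 × Fin 2, ∑ y : Fin 2 × Fin 2,
    star (v x) * v y *
      P (Matrix.single x.1 y.1 1 ⊗ₖ Matrix.single p q 1) x.2 y.2

/-- auxiliary quadratic functional -/
def CqD (σ : Matrix (Fin dP) (Fin dP) ℂ) (v : (Fin 2 × Fin 2) → ℂ) : ℂ :=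
  ∑ x : Fin 2 × Fin 2, ∑ y : Fin 2 × Fin 2,
    star (v x) * v y * P (Matrix.single x.1 y.1 1 ⊗ₖ σ) x.2 y.2

lemma Pexp_entry (A : Matrix (Fin 2) (Fin 2) ℂ) (σ : Matrix (Fin dP) (Fin dP) ℂ)
    (k l : Fin 2) :
    P (A ⊗ₖ σ) k l = ∑ p, ∑ q, σ p q * P (A ⊗ₖ Matrix.single p q 1) k l := by
  let Kc : Matrix (Fin dP) (Fin dP) ℂ →ₗ[ℂ] Matrix (Fin 2 × Fin dP) (Fin 2 × Fin dP) ℂ :=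
    { toFun := fun τ => A ⊗ₖ τ
      map_add' := fun X Y => Matrix.kronecker_add A X Y
      map_smul' := fun c X => Matrix.kronecker_smul c A X }
  have h : P (A ⊗ₖ σ) = (P.comp Kc) σ := rfl
  rw [h]
  conv_lhs => rw [Matrix.matrix_eq_sum_single σ]
  rw [map_sum, Matrix.sum_apply]
  refine Finset.sum_congr rfl fun p _ => ?_
  rw [map_sum, Matrix.sum_apply]
  refine Finset.sum_congr rfl fun q _ => ?_
  rw [show Matrix.single p q (σ p q) = σ p q • Matrix.single p q (1:ℂ) by
    rw [Matrix.smul_single, smul_eq_mul, mul_one], map_smul]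
  rw [Matrix.smul_apply, smul_eq_mul]
  rfl

lemma sum_swap4 (f : (Fin 2 × Fin 2) → (Fin 2 × Fin 2) → Fin dP → Fin dP → ℂ) :
    (∑ x : Fin 2 × Fin 2, ∑ y : Fin 2 × Fin 2, ∑ p, ∑ q, f x y p q)
      = ∑ p, ∑ q, ∑ x : Fin 2 × Fin 2, ∑ y : Fin 2 × Fin 2, f x y p q := by
  calc (∑ x : Fin 2 × Fin 2, ∑ y : Fin 2 × Fin 2, ∑ p, ∑ q, f x y p q)
      = ∑ x : Fin 2 × Fin 2, ∑ p, ∑ y : Fin 2 × Fin 2, ∑ q, f x y p q :=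
        Finset.sum_congr rfl fun x _ => Finset.sum_comm
    _ = ∑ p, ∑ x : Fin 2 × Fin 2, ∑ y : Fin 2 × Fin 2, ∑ q, f x y p q := Finset.sum_comm
    _ = ∑ p, ∑ x : Fin 2 × Fin 2, ∑ q, ∑ y : Fin 2 × Fin 2, f x y p q :=
        Finset.sum_congr rfl fun p _ => Finset.sum_congr rfl fun x _ => Finset.sum_comm
    _ = ∑ p, ∑ q, ∑ x : Fin 2 × Fin 2, ∑ y : Fin 2 × Fin 2, f x y p q :=
        Finset.sum_congr rfl fun p _ => Finset.sum_comm

lemma CqD_eq_trace (σ : Matrix (Fin dP) (Fin dP) ℂ) (v : (Fin 2 × Fin 2) → ℂ) :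
    CqD P σ v = (σ * (HmD P v)ᵀ).trace := by
  have rhs : (σ * (HmD P v)ᵀ).trace = ∑ p, ∑ q, σ p q * HmD P v p q := by
    rw [Matrix.trace]
    refine Finset.sum_congr rfl fun p _ => ?_
    rw [Matrix.diag_apply, Matrix.mul_apply]
    refine Finset.sum_congr rfl fun q _ => ?_
    rw [Matrix.transpose_apply]
  rw [rhs]
  calc CqD P σ v
      = ∑ x : Fin 2 × Fin 2, ∑ y : Fin 2 × Fin 2, ∑ p, ∑ q,
          σ p q * (star (v x) * v y *
            P (Matrix.single x.1 y.1 1 ⊗ₖ Matrix.single p q 1) x.2 y.2) := by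
        refine Finset.sum_congr rfl fun x _ => Finset.sum_congr rfl fun y _ => ?_
        rw [Pexp_entry, Finset.mul_sum]
        refine Finset.sum_congr rfl fun p _ => ?_
        rw [Finset.mul_sum]
        refine Finset.sum_congr rfl fun q _ => ?_
        ring
    _ = ∑ p, ∑ q, ∑ x : Fin 2 × Fin 2, ∑ y : Fin 2 × Fin 2,
          σ p q * (star (v x) * v y *
            P (Matrix.single x.1 y.1 1 ⊗ₖ Matrix.single p q 1) x.2 y.2) :=
        sum_swap4 _
    _ = ∑ p, ∑ q, σ p q * HmD P v p q := by
        refine Finset.sum_congr rfl fun p _ => Finset.sum_congr rfl fun q _ => ?_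
        rw [show HmD P v p q = ∑ x : Fin 2 × Fin 2, ∑ y : Fin 2 × Fin 2,
          star (v x) * v y *
            P (Matrix.single x.1 y.1 1 ⊗ₖ Matrix.single p q 1) x.2 y.2 from rfl]
        rw [Finset.mul_sum]
        refine Finset.sum_congr rfl fun x _ => ?_
        rw [Finset.mul_sum]

lemma HmD_posSemidef (hPSD : (choi P).PosSemidef) (v : (Fin 2 × Fin 2) → ℂ) :
    (HmD P v).PosSemidef := by
  classical
  let W : Matrix ((Fin 2 × Fin dP) × Fin 2) (Fin dP) ℂ :=
    Matrix.of fun a q => if a.1.2 = q then v (a.1.1, a.2) else 0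
  have hW : HmD P v = Wᴴ * choi P * W := by
    ext p q
    have lhs_eq : HmD P v p q = ∑ j : Fin 2, ∑ l : Fin 2, ∑ i : Fin 2, ∑ k : Fin 2,
        star (v (i,k)) * v (j,l) *
          P (Matrix.single i j 1 ⊗ₖ Matrix.single p q 1) k l := by
      rw [show HmD P v p q = ∑ x : Fin 2 × Fin 2, ∑ y : Fin 2 × Fin 2,
        star (v x) * v y *
          P (Matrix.single x.1 y.1 1 ⊗ₖ Matrix.single p q 1) x.2 y.2 from rfl]
      rw [Finset.sum_comm]
      rw [Fintype.sum_prod_type]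
      refine Finset.sum_congr rfl fun j _ => ?_
      refine Finset.sum_congr rfl fun l _ => ?_
      rw [Fintype.sum_prod_type]
    rw [lhs_eq]
    rw [Matrix.mul_apply]
    simp only [Matrix.mul_apply, Matrix.conjTranspose_apply, Matrix.of_apply, W,
      Fintype.sum_prod_type, apply_ite (star : ℂ → ℂ), star_zero, ite_mul, mul_ite,
      zero_mul, mul_zero, Finset.sum_ite_irrel, Finset.sum_const_zero,
      Finset.sum_ite_eq', Finset.mem_univ, if_true, Finset.sum_mul, Finset.mul_sum]
    refine Finset.sum_congr rfl fun j _ => Finset.sum_congr rfl fun l _ =>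
      Finset.sum_congr rfl fun i _ => Finset.sum_congr rfl fun k _ => ?_
    rw [choi_apply, ← kron_stdb]
    ring
  rw [hW]
  exact hPSD.conjTranspose_mul_mul_same W

end Machinery

/-! ### The main theorem -/

set_option maxHeartbeats 1600000 in
/-- the spontaneous-emission (amplitude damping) Lindbladian with single
jump operator `√γ |0⟩⟨1|` is not quantum programmable. -/
theorem spontaneous_emission_not_quantum_programmable
    (γ : ℝ) (hγ : 0 < γ)
    (L : Matrix (Fin 2) (Fin 2) ℂ →ₗ[ℂ] Matrix (Fin 2) (Fin 2) ℂ)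
    (hL : ∀ ρ : Matrix (Fin 2) (Fin 2) ℂ,
      L ρ = (γ : ℂ) • (ρ 1 1 • Matrix.single 0 0 (1 : ℂ) -
        (2⁻¹ : ℂ) • (Matrix.single 1 1 (1 : ℂ) * ρ +
          ρ * Matrix.single 1 1 (1 : ℂ)))) :
    ¬ ∃ (dP : ℕ) (_ : 1 ≤ dP)
        (P : Matrix (Fin 2 × Fin dP) (Fin 2 × Fin dP) ℂ →ₗ[ℂ] Matrix (Fin 2) (Fin 2) ℂ)
        (π : ℝ → Matrix (Fin dP) (Fin dP) ℂ),
        IsCPTP P ∧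
        (∀ t : ℝ, 0 ≤ t → IsDensityMatrix (π t)) ∧
        (∀ i j, DifferentiableWithinAt ℝ (fun t => π t i j) (Set.Ici 0) 0) ∧
        ∀ ρ, IsDensityMatrix ρ → ∀ t : ℝ, 0 ≤ t →
          P (ρ ⊗ₖ π t) = expL ((t : ℂ) • L) ρ := by
  rintro ⟨dP, hdP, P, π, ⟨hPSD, hTP⟩, hdens, hdiff, hprog⟩
  -- Step 1: the programmability equation holds for all matrices, by linearity.
  have hmaster : ∀ t : ℝ, 0 ≤ t → ∀ X : Matrix (Fin 2) (Fin 2) ℂ,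
      P (X ⊗ₖ π t) = expL ((t : ℂ) • L) X := by
    intro t ht
    let K : Matrix (Fin 2) (Fin 2) ℂ →ₗ[ℂ] Matrix (Fin 2 × Fin dP) (Fin 2 × Fin dP) ℂ :=
      { toFun := fun X => X ⊗ₖ π t
        map_add' := fun X Y => Matrix.add_kronecker X Y (π t)
        map_smul' := fun c X => Matrix.smul_kronecker c X (π t) }
    have h := SpanDensity.linearMap_eq_of_eq_on_density (P.comp K) (expL ((t : ℂ) • L))
      (fun ρ hρ => by simpa [K, LinearMap.comp_apply] using hprog ρ hρ t ht)
    intro X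
    simpa [K, LinearMap.comp_apply] using h X
  -- Step 2: at `t = 0` the channel implements the identity.
  have hzero : ∀ X : Matrix (Fin 2) (Fin 2) ℂ, P (X ⊗ₖ π 0) = X := by
    intro X
    have h := hmaster 0 le_rfl X
    rwa [Complex.ofReal_zero, zero_smul, expL_zero_apply] at h
  -- Step 3: the derivative of the program state at `t = 0`.
  set M : Matrix (Fin dP) (Fin dP) ℂ :=
    Matrix.of fun p q => derivWithin (fun t => π t p q) (Set.Ici 0) 0 with hMdef
  have hUD : UniqueDiffWithinAt ℝ (Set.Ici (0:ℝ)) 0 := uniqueDiffOn_Ici 0 0 Set.self_mem_Ici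
  have hMd : ∀ p q, HasDerivWithinAt (fun t => π t p q) (M p q) (Set.Ici 0) 0 :=
    fun p q => (hdiff p q).hasDerivWithinAt
  have hπherm : ∀ t, 0 ≤ t → ∀ p q, star (π t p q) = π t q p := by
    intro t ht p q
    have h := (hdens t ht).1.1
    calc star (π t p q) = (π t)ᴴ q p := (Matrix.conjTranspose_apply _ _ _).symm
      _ = π t q p := by rw [h]
  have hMherm : ∀ p q, star (M p q) = M q p := by
    intro p q
    have h1 : HasDerivWithinAt (fun t => star (π t p q)) (star (M p q)) (Set.Ici 0) 0 :=
      (hMd p q).cstar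
    have h2 : HasDerivWithinAt (fun t => π t q p) (star (M p q)) (Set.Ici 0) 0 :=
      h1.congr (fun y hy => (hπherm y hy p q).symm) (hπherm 0 le_rfl p q).symm
    rw [← h2.derivWithin hUD, ← (hMd q p).derivWithin hUD]
  have hMH : Mᴴ = M := by
    ext p q
    rw [Matrix.conjTranspose_apply]
    exact hMherm q p
  -- quadratic-form formula
  have hformula : ∀ (σ : Matrix (Fin dP) (Fin dP) ℂ) (y : Fin dP → ℂ),
      dotProduct (star y) (σ *ᵥ y) = ∑ p, ∑ q, star (y p) * σ p q * y q := by
    intro σ y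
    simp [dotProduct, Matrix.mulVec, Finset.mul_sum, mul_assoc]
  -- Step 4: kernel positivity of M
  have hker : ∀ y : Fin dP → ℂ, π 0 *ᵥ y = 0 →
      0 ≤ dotProduct (star y) (M *ᵥ y) := by
    intro y hy
    set z := dotProduct (star y) (M *ᵥ y) with hz
    have hzsum : z = ∑ p, ∑ q, star (y p) * M p q * y q := hformula M y
    have hfd : HasDerivWithinAt (fun t => ∑ p, ∑ q, star (y p) * π t p q * y q)
        z (Set.Ici 0) 0 := by
      rw [hzsum]
      refine HasDerivWithinAt.fun_sum fun p _ => HasDerivWithinAt.fun_sum fun q _ => ?_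
      simpa [mul_assoc] using (((hMd p q).const_mul (star (y p))).mul_const (y q))
    have hfre : HasDerivWithinAt (fun t => (∑ p, ∑ q, star (y p) * π t p q * y q).re)
        z.re (Set.Ici 0) 0 := hfd.cre
    have hnn : ∀ t, 0 ≤ t → 0 ≤ (∑ p, ∑ q, star (y p) * π t p q * y q).re := by
      intro t ht
      have h0 := (hdens t ht).1.dotProduct_mulVec_nonneg y
      rw [hformula (π t) y] at h0
      exact (Complex.nonneg_iff.mp h0).1
    have h00 : (fun t => (∑ p, ∑ q, star (y p) * π t p q * y q).re) 0 = 0 := by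
      have h1 : dotProduct (star y) (π 0 *ᵥ y) = 0 := by rw [hy]; simp
      rw [hformula (π 0) y] at h1
      simp only [h1, Complex.zero_re]
    have hre : 0 ≤ z.re := deriv_nonneg_of_nonneg hfre h00 (fun t ht => hnn t ht)
    have hstar : star z = z := by
      rw [hzsum]
      rw [show star (∑ p, ∑ q, star (y p) * M p q * y q)
          = ∑ p : Fin dP, ∑ q : Fin dP, star (star (y p) * M p q * y q) by simp]
      rw [Finset.sum_comm]
      refine Finset.sum_congr rfl fun q _ => Finset.sum_congr rfl fun p _ => ?_
      rw [star_mul', star_mul', star_star, hMherm p q]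
      ring
    have him : z.im = 0 := by
      have h2 := congrArg Complex.im hstar
      simp only [Complex.star_def, Complex.conj_im] at h2
      linarith
    exact Complex.nonneg_iff.mpr ⟨hre, him.symm⟩
  -- Step 5: expansion of P over the program factor
  have hPexp : ∀ (A : Matrix (Fin 2) (Fin 2) ℂ) (σ : Matrix (Fin dP) (Fin dP) ℂ),
      P (A ⊗ₖ σ) = ∑ p, ∑ q, σ p q • P (A ⊗ₖ Matrix.single p q 1) := by
    intro A σ
    let Kc : Matrix (Fin dP) (Fin dP) ℂ →ₗ[ℂ] Matrix (Fin 2 × Fin dP) (Fin 2 × Fin dP) ℂ :=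
      { toFun := fun τ => A ⊗ₖ τ
        map_add' := fun X Y => Matrix.kronecker_add A X Y
        map_smul' := fun c X => Matrix.kronecker_smul c A X }
    have h : P (A ⊗ₖ σ) = (P.comp Kc) σ := rfl
    rw [h]
    conv_lhs => rw [Matrix.matrix_eq_sum_single σ]
    rw [map_sum]
    refine Finset.sum_congr rfl fun p _ => ?_
    rw [map_sum]
    refine Finset.sum_congr rfl fun q _ => ?_
    rw [show Matrix.single p q (σ p q) = σ p q • Matrix.single p q (1:ℂ) by
      rw [Matrix.smul_single, smul_eq_mul, mul_one], map_smul]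
    rfl
  have hPexpEntry : ∀ (A : Matrix (Fin 2) (Fin 2) ℂ) (σ : Matrix (Fin dP) (Fin dP) ℂ)
      (k l : Fin 2), P (A ⊗ₖ σ) k l
        = ∑ p, ∑ q, σ p q * P (A ⊗ₖ Matrix.single p q 1) k l := by
    intro A σ k l
    rw [hPexp A σ, Matrix.sum_apply]
    refine Finset.sum_congr rfl fun p _ => ?_
    rw [Matrix.sum_apply]
    refine Finset.sum_congr rfl fun q _ => ?_
    rw [Matrix.smul_apply, smul_eq_mul]
  -- Step 6: the derivative identity P(E_ij ⊗ M) = L(E_ij)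
  have hPM : ∀ i j : Fin 2,
      P (Matrix.single i j 1 ⊗ₖ M) = L (Matrix.single i j 1) := by
    intro i j
    ext k l
    have hd1 : HasDerivWithinAt (fun t => P (Matrix.single i j 1 ⊗ₖ π t) k l)
        (P (Matrix.single i j 1 ⊗ₖ M) k l) (Set.Ici 0) 0 := by
      have hre : ∀ t : ℝ, P (Matrix.single i j 1 ⊗ₖ π t) k l
          = ∑ p, ∑ q, π t p q *
              P (Matrix.single i j 1 ⊗ₖ Matrix.single p q 1) k l :=
        fun t => hPexpEntry _ _ k l
      simp only [hre]
      rw [hPexpEntry _ M k l]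
      refine HasDerivWithinAt.fun_sum fun p _ => HasDerivWithinAt.fun_sum fun q _ => ?_
      exact (hMd p q).mul_const _
    have hd2 : HasDerivWithinAt (fun t => P (Matrix.single i j 1 ⊗ₖ π t) k l)
        (L (Matrix.single i j 1) k l) (Set.Ici 0) 0 := by
      have hg := (hasDerivAt_expL L (Matrix.single i j 1) k l).hasDerivWithinAt
        (s := Set.Ici 0)
      refine hg.congr (fun y hy => ?_) ?_
      · rw [hmaster y hy]
      · rw [hmaster 0 le_rfl]
    rw [← hd1.derivWithin hUD, ← hd2.derivWithin hUD]
  -- Step 7: nonnegativity of the quadratic functional on PSD program operators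
  have hCq_nonneg : ∀ (σ : Matrix (Fin dP) (Fin dP) ℂ), σ.PosSemidef →
      ∀ v, 0 ≤ CqD P σ v := by
    intro σ hσ v
    rw [CqD_eq_trace]
    exact trace_mul_psd_nonneg hσ (HmD_posSemidef P hPSD v).transpose
  -- Step 8: vanishing at π 0 on the orthogonal complement of Ω
  have hCqπ0 : ∀ v : (Fin 2 × Fin 2) → ℂ, v (0,0) + v (1,1) = 0 → CqD P (π 0) v = 0 := by
    intro v hv
    have hP0 : ∀ x y : Fin 2 × Fin 2,
        P (Matrix.single x.1 y.1 1 ⊗ₖ π 0) x.2 y.2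
          = Matrix.single x.1 y.1 1 x.2 y.2 := fun x y => by rw [hzero]
    have hv' : v 0 + v 1 = 0 := hv
    have hstar0 : (starRingEnd ℂ) (v 0) + (starRingEnd ℂ) (v 1) = 0 := by
      have h := congrArg (starRingEnd ℂ) hv'
      simpa using h
    rw [show CqD P (π 0) v = ∑ x : Fin 2 × Fin 2, ∑ y : Fin 2 × Fin 2,
      star (v x) * v y * P (Matrix.single x.1 y.1 1 ⊗ₖ π 0) x.2 y.2 from rfl]
    simp only [hP0]
    rw [Fintype.sum_prod_type]
    simp only [Fintype.sum_prod_type, Fin.sum_univ_two]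
    simp [Matrix.single, Matrix.of_apply]
    linear_combination (v 0 + v 1) * hstar0
  -- Step 9: entries of L on the standard basis
  obtain ⟨hB00, hB01, hB10, hB11⟩ := SpanDensity.stdb_mat
  have eL1 : L (Matrix.single 1 1 1) 0 0 = (γ:ℂ) := by
    rw [hL, hB11, hB00]
    norm_num [Matrix.smul_apply, Matrix.sub_apply, Matrix.add_apply, Matrix.mul_apply,
      Fin.sum_univ_two, smul_eq_mul]
  have eL2 : L (Matrix.single 0 0 1) 1 1 = 0 := by
    rw [hL, hB11, hB00]
    norm_num [Matrix.smul_apply, Matrix.sub_apply, Matrix.add_apply, Matrix.mul_apply,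
      Fin.sum_univ_two, smul_eq_mul]
  have eL3 : L (Matrix.single 0 0 1) 0 0 = 0 := by
    rw [hL, hB11, hB00]
    norm_num [Matrix.smul_apply, Matrix.sub_apply, Matrix.add_apply, Matrix.mul_apply,
      Fin.sum_univ_two, smul_eq_mul]
  have eL4 : L (Matrix.single 0 1 1) 0 1 = -((γ:ℂ)/2) := by
    rw [hL, hB11, hB00, hB01]
    norm_num [Matrix.smul_apply, Matrix.sub_apply, Matrix.add_apply, Matrix.mul_apply,
      Fin.sum_univ_two, smul_eq_mul]
    ring
  have eL5 : L (Matrix.single 1 0 1) 1 0 = -((γ:ℂ)/2) := by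
    rw [hL, hB11, hB00, hB10]
    norm_num [Matrix.smul_apply, Matrix.sub_apply, Matrix.add_apply, Matrix.mul_apply,
      Fin.sum_univ_two, smul_eq_mul]
    ring
  have eL6 : L (Matrix.single 1 1 1) 1 1 = -(γ:ℂ) := by
    rw [hL, hB11, hB00]
    norm_num [Matrix.smul_apply, Matrix.sub_apply, Matrix.add_apply, Matrix.mul_apply,
      Fin.sum_univ_two, smul_eq_mul]
  -- Step 10: Cq with M expressed through L
  have hCqM : ∀ v, CqD P M v = ∑ x : Fin 2 × Fin 2, ∑ y : Fin 2 × Fin 2,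
      star (v x) * v y * L (Matrix.single x.1 y.1 1) x.2 y.2 := by
    intro v
    rw [show CqD P M v = ∑ x : Fin 2 × Fin 2, ∑ y : Fin 2 × Fin 2,
      star (v x) * v y * P (Matrix.single x.1 y.1 1 ⊗ₖ M) x.2 y.2 from rfl]
    exact Finset.sum_congr rfl fun x _ => Finset.sum_congr rfl fun y _ => by rw [hPM]
  -- Step 11: the support projector and the compressed derivative N
  obtain ⟨Qm, hQH, hQρ, hQkill⟩ := exists_support_proj (hdens 0 le_rfl).1
  set N : Matrix (Fin dP) (Fin dP) ℂ := (1 - Qm) * M * (1 - Qm) with hNdef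
  have hQ'H : (1 - Qm)ᴴ = 1 - Qm := by
    rw [Matrix.conjTranspose_sub, Matrix.conjTranspose_one, hQH]
  have hρQ' : π 0 * (1 - Qm) = 0 := by rw [Matrix.mul_sub, hQρ, Matrix.mul_one, sub_self]
  have hN : N.PosSemidef := by
    refine Matrix.PosSemidef.of_dotProduct_mulVec_nonneg ?_ ?_
    · show Nᴴ = N
      rw [hNdef, Matrix.conjTranspose_mul, Matrix.conjTranspose_mul, hQ'H, hMH,
        Matrix.mul_assoc]
    · intro x
      have hyk : π 0 *ᵥ ((1 - Qm) *ᵥ x) = 0 := by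
        rw [Matrix.mulVec_mulVec, hρQ', Matrix.zero_mulVec]
      have hk := hker ((1 - Qm) *ᵥ x) hyk
      have he : dotProduct (star x) (N *ᵥ x)
          = dotProduct (star ((1 - Qm) *ᵥ x)) (M *ᵥ ((1 - Qm) *ᵥ x)) := by
        rw [Matrix.star_mulVec, hQ'H, hNdef]
        rw [show ((1 - Qm) * M * (1 - Qm)) *ᵥ x = (1 - Qm) *ᵥ (M *ᵥ ((1 - Qm) *ᵥ x)) by
          rw [Matrix.mulVec_mulVec, Matrix.mulVec_mulVec]]
        rw [Matrix.dotProduct_mulVec (star x) (1 - Qm)]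
      rwa [← he] at hk
  -- Step 12: the key chain identity
  have hchain : ∀ v : (Fin 2 × Fin 2) → ℂ, v (0,0) + v (1,1) = 0 →
      CqD P N v = CqD P M v := by
    intro v hv
    have hJpsd : ((HmD P v)ᵀ).PosSemidef := (HmD_posSemidef P hPSD v).transpose
    have hJH : ((HmD P v)ᵀ)ᴴ = (HmD P v)ᵀ := hJpsd.isHermitian
    have h1 : (π 0 * (HmD P v)ᵀ).trace = 0 := by
      rw [← CqD_eq_trace]; exact hCqπ0 v hv
    have h2 : π 0 * (HmD P v)ᵀ = 0 :=
      mul_eq_zero_of_trace_mul_psd (hdens 0 le_rfl).1 hJpsd h1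
    have h3 : Qm * (HmD P v)ᵀ = 0 := hQkill _ h2
    have h4 : (HmD P v)ᵀ * Qm = 0 := by
      have h5 := congrArg Matrix.conjTranspose h3
      rwa [Matrix.conjTranspose_mul, hQH, hJH, Matrix.conjTranspose_zero] at h5
    rw [CqD_eq_trace, CqD_eq_trace]
    have hMN : M - N = Qm * M + (1 - Qm) * M * Qm := by rw [hNdef]; noncomm_ring
    have t1 : (Qm * M * (HmD P v)ᵀ).trace = 0 := by
      rw [Matrix.trace_mul_cycle, h4, Matrix.zero_mul, Matrix.trace_zero]
    have t2 : ((1 - Qm) * M * Qm * (HmD P v)ᵀ).trace = 0 := by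
      rw [Matrix.mul_assoc ((1 - Qm) * M) Qm, h3, Matrix.mul_zero, Matrix.trace_zero]
    have hdiff0 : (M * (HmD P v)ᵀ).trace - (N * (HmD P v)ᵀ).trace = 0 := by
      rw [← Matrix.trace_sub, ← Matrix.sub_mul, hMN, Matrix.add_mul, Matrix.trace_add,
        t1, t2, add_zero]
    have h6 := sub_eq_zero.mp hdiff0
    exact h6.symm
  -- Step 13: the distinguished vectors and their Cq values
  set e01 : (Fin 2 × Fin 2) → ℂ := fun x => if x = (0,1) then 1 else 0 with he01def
  set e10 : (Fin 2 × Fin 2) → ℂ := fun x => if x = (1,0) then 1 else 0 with he10def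
  set vr : ℝ → (Fin 2 × Fin 2) → ℂ :=
    fun r x => if x = (0,0) then (r:ℂ) else if x = (1,1) then 1 else 0 with hvrdef
  have hCq_e01 : ∀ σ, CqD P σ e01 = P (Matrix.single 0 0 1 ⊗ₖ σ) 1 1 := by
    intro σ
    rw [show CqD P σ e01 = ∑ x : Fin 2 × Fin 2, ∑ y : Fin 2 × Fin 2,
      star (e01 x) * e01 y * P (Matrix.single x.1 y.1 1 ⊗ₖ σ) x.2 y.2 from rfl]
    simp [he01def, Fintype.sum_prod_type, Fin.sum_univ_two, Prod.mk.injEq]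
  have hCq_e10 : ∀ σ, CqD P σ e10 = P (Matrix.single 1 1 1 ⊗ₖ σ) 0 0 := by
    intro σ
    rw [show CqD P σ e10 = ∑ x : Fin 2 × Fin 2, ∑ y : Fin 2 × Fin 2,
      star (e10 x) * e10 y * P (Matrix.single x.1 y.1 1 ⊗ₖ σ) x.2 y.2 from rfl]
    simp [he10def, Fintype.sum_prod_type, Fin.sum_univ_two, Prod.mk.injEq]
  have hCq_vr : ∀ σ (r : ℝ), CqD P σ (vr r)
      = (r:ℂ) * (r:ℂ) * P (Matrix.single 0 0 1 ⊗ₖ σ) 0 0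
        + (r:ℂ) * P (Matrix.single 0 1 1 ⊗ₖ σ) 0 1
        + (r:ℂ) * P (Matrix.single 1 0 1 ⊗ₖ σ) 1 0
        + P (Matrix.single 1 1 1 ⊗ₖ σ) 1 1 := by
    intro σ r
    rw [show CqD P σ (vr r) = ∑ x : Fin 2 × Fin 2, ∑ y : Fin 2 × Fin 2,
      star (vr r x) * vr r y * P (Matrix.single x.1 y.1 1 ⊗ₖ σ) x.2 y.2 from rfl]
    simp [hvrdef, Fintype.sum_prod_type, Fin.sum_univ_two, Prod.mk.injEq, Complex.conj_ofReal]
    ring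
  -- Step 14: evaluation of Cq M on the distinguished vectors
  have hM_e01 : CqD P M e01 = 0 := by
    rw [hCqM]
    simp [he01def, Fintype.sum_prod_type, Fin.sum_univ_two, Prod.mk.injEq, eL2]
  have hM_e10 : CqD P M e10 = (γ:ℂ) := by
    rw [hCqM]
    simp [he10def, Fintype.sum_prod_type, Fin.sum_univ_two, Prod.mk.injEq, eL1]
  have hM_vrm1 : CqD P M (vr (-1)) = 0 := by
    rw [hCqM]
    simp [hvrdef, Fintype.sum_prod_type, Fin.sum_univ_two, Prod.mk.injEq,
      Complex.conj_ofReal, eL3, eL4, eL5, eL6]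
    ring
  -- Step 15: collect the scalar facts
  have hNσ01 : P (Matrix.single 0 0 1 ⊗ₖ N) 1 1 = 0 := by
    have h := hchain e01 (by simp [he01def, Prod.ext_iff])
    rw [hCq_e01 N, hM_e01] at h
    exact h
  have hNσ10 : P (Matrix.single 1 1 1 ⊗ₖ N) 0 0 = (γ:ℂ) := by
    have h := hchain e10 (by simp [he10def, Prod.ext_iff])
    rw [hCq_e10 N, hM_e10] at h
    exact h
  have hNv3 : ((-1:ℝ):ℂ) * ((-1:ℝ):ℂ) * P (Matrix.single 0 0 1 ⊗ₖ N) 0 0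
      + ((-1:ℝ):ℂ) * P (Matrix.single 0 1 1 ⊗ₖ N) 0 1
      + ((-1:ℝ):ℂ) * P (Matrix.single 1 0 1 ⊗ₖ N) 1 0
      + P (Matrix.single 1 1 1 ⊗ₖ N) 1 1 = 0 := by
    have h := hchain (vr (-1)) (by simp [hvrdef, Prod.ext_iff])
    rw [hCq_vr N (-1), hM_vrm1] at h
    exact h
  have htr0 : P (Matrix.single 0 0 1 ⊗ₖ N) 0 0
      + P (Matrix.single 0 0 1 ⊗ₖ N) 1 1 = N.trace := by
    have h := hTP (Matrix.single 0 0 1 ⊗ₖ N)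
    rw [Matrix.trace_kronecker] at h
    rw [show (Matrix.single (0:Fin 2) 0 (1:ℂ)).trace = 1 by
      rw [hB00]; simp [Matrix.trace, Fin.sum_univ_two], one_mul] at h
    rw [← h, Matrix.trace]
    simp [Fin.sum_univ_two]
  have htr1 : P (Matrix.single 1 1 1 ⊗ₖ N) 0 0
      + P (Matrix.single 1 1 1 ⊗ₖ N) 1 1 = N.trace := by
    have h := hTP (Matrix.single 1 1 1 ⊗ₖ N)
    rw [Matrix.trace_kronecker] at h
    rw [show (Matrix.single (1:Fin 2) 1 (1:ℂ)).trace = 1 by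
      rw [hB11]; simp [Matrix.trace, Fin.sum_univ_two], one_mul] at h
    rw [← h, Matrix.trace]
    simp [Fin.sum_univ_two]
  have hrq : ∀ r : ℝ, 0 ≤ (r:ℂ) * (r:ℂ) * P (Matrix.single 0 0 1 ⊗ₖ N) 0 0
      + (r:ℂ) * P (Matrix.single 0 1 1 ⊗ₖ N) 0 1
      + (r:ℂ) * P (Matrix.single 1 0 1 ⊗ₖ N) 1 0
      + P (Matrix.single 1 1 1 ⊗ₖ N) 1 1 := by
    intro r
    have h := hCq_nonneg N hN (vr r)
    rwa [hCq_vr N r] at h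
  -- Step 16: pass to real parts and derive the contradiction
  set a : ℂ := P (Matrix.single 0 0 1 ⊗ₖ N) 0 0 with hadef
  set b1 : ℂ := P (Matrix.single 0 1 1 ⊗ₖ N) 0 1 with hb1def
  set b2 : ℂ := P (Matrix.single 1 0 1 ⊗ₖ N) 1 0 with hb2def
  set d : ℂ := P (Matrix.single 1 1 1 ⊗ₖ N) 1 1 with hddef
  have hAD : a = (γ:ℂ) + d := by
    have h1 : a = N.trace := by rw [← htr0, hNσ01, add_zero]
    have h2 : (γ:ℂ) + d = N.trace := by rw [← htr1, hNσ10]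
    rw [h1, h2]
  have hBsum : b1 + b2 = a + d := by
    have := hNv3
    push_cast at this
    linear_combination -this
  set A : ℝ := a.re with hA
  set D : ℝ := d.re with hD
  set S : ℝ := b1.re + b2.re with hS
  have hADre : A = γ + D := by
    have := congrArg Complex.re hAD
    simpa [Complex.add_re, Complex.ofReal_re] using this
  have hSre : S = A + D := by
    have := congrArg Complex.re hBsum
    simpa [Complex.add_re] using this
  have hrqre : ∀ r : ℝ, 0 ≤ r * r * A + r * S + D := by
    intro r
    have h := hrq r
    have h2 := (Complex.nonneg_iff.mp h).1
    have h3 : ((r:ℂ) * (r:ℂ) * a + (r:ℂ) * b1 + (r:ℂ) * b2 + d).re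
        = r * r * A + r * S + D := by
      rw [show (r:ℂ) * (r:ℂ) * a = ((r*r : ℝ):ℂ) * a by push_cast; ring]
      simp [Complex.add_re, Complex.re_ofReal_mul, hA, hD, hS]
      ring
    rw [h3] at h2
    exact h2
  have hDpos : 0 ≤ D := by
    have := hrqre 0
    simpa using this
  have hApos : 0 < A := by rw [hADre]; linarith
  set r0 : ℝ := -S / (2*A) with hr0
  have hAr : A * r0 = -S/2 := by
    rw [hr0]
    field_simp
  have h := hrqre r0
  have h4 : (0:ℝ) ≤ 4*A*(r0*r0*A + r0*S + D) :=
    mul_nonneg (by linarith) h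
  have hrw : 4*A*(r0*r0*A + r0*S + D) = 4*(A*r0)*(A*r0) + 4*(A*r0)*S + 4*A*D := by ring
  rw [hrw, hAr] at h4
  rw [hSre, hADre] at h4
  nlinarith [h4, hγ, mul_pos hγ hγ]
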